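/- Let I = {i_1,...,i_d} ⊂ {1,...,m} with det(X[i_1,...,i_d]) ≠ 0. The saturated design p_I with p_{i_1} = ... = p_{i_d} = 1/d (and all other coordinates 0) maximizes f(p) = det(X'diag(p_1w_1,...,p_mw_m)X) over the probability simplex if and only if for each i ∉ I: Σ_{j ∈ I} det(X[{i} ∪ I \ {j}])² / w_j ≤ det(X[i_1,...,i_d])² / w_i. -/

import Mathlib

/-!
The information matrix `M(p) = Xᵀ diag(p w) X` is affine in the design `p`. For positive
definite `M(p)`, AM–GM on the eigenvalues of `M(p)^{-1/2} M(q) M(p)^{-1/2}` gives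
`det M(q) ≤ det M(p) (tr (M(p)⁻¹ M(q)) / d)^d`, where `tr (M(p)⁻¹ M(q)) = ∑ₖ qₖ wₖ xₖᵀ M(p)⁻¹ xₖ`;
so `p` is D-optimal as soon as every variance `wₖ xₖᵀ M(p)⁻¹ xₖ` is at most `d`. Conversely, if
one of them exceeds `d`, the matrix determinant lemma shows that moving a little mass from `p`
to the vertex `eₖ` increases the determinant (Kiefer–Wolfowitz).

For the saturated design, `M(p_I) = X[I]ᵀ diag(w_I / d) X[I]`, and by Cramer's rule the
coordinates of `xᵢᵀ X[I]⁻¹` are, up to sign, `det X[{i} ∪ I ∖ {j}] / det X[I]`. Hence the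
variance equals `d` on `I`, and off `I` it is at most `d` exactly when the stated inequality
holds.
-/

open Matrix Finset

/-- The D-criterion f(p) = det(Xᵀ diag(p₁w₁,...,pₘwₘ) X). -/
noncomputable def fdet (m d : ℕ) (X : Matrix (Fin m) (Fin d) ℝ) (w p : Fin m → ℝ) : ℝ :=
  (Xᵀ * Matrix.diagonal (fun i => p i * w i) * X).det

/-- det X[S]: the determinant of the square submatrix of X formed by the rows indexed
by S (in increasing order); 0 if S does not have exactly d elements. -/
noncomputable def subdet (m d : ℕ) (X : Matrix (Fin m) (Fin d) ℝ) (S : Finset (Fin m)) : ℝ :=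
  if h : S.card = d then
    (X.submatrix (fun k : Fin d => (S.orderIsoOfFin h k : Fin m)) id).det
  else 0

theorem prod_le_sum_div_card_pow {ι : Type*} [Fintype ι] {z : ι → ℝ} (hz : ∀ i, 0 ≤ z i) :
    ∏ i, z i ≤ ((∑ i, z i) / Fintype.card ι) ^ Fintype.card ι := by
  rcases isEmpty_or_nonempty ι with hι | hι
  · simp
  set n := Fintype.card ι
  have hn : (n : ℝ) ≠ 0 := Nat.cast_ne_zero.2 Fintype.card_ne_zero
  have hamgm := Real.geom_mean_le_arith_mean_weighted univ (fun _ => (n : ℝ)⁻¹) z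
    (fun _ _ => by positivity) (by simp [n, hn]) (fun i _ => hz i)
  calc ∏ i, z i = (∏ i, z i ^ (n : ℝ)⁻¹) ^ n := by
        rw [← prod_pow]
        refine prod_congr rfl fun i _ => ?_
        rw [← Real.rpow_natCast, ← Real.rpow_mul (hz i), inv_mul_cancel₀ hn, Real.rpow_one]
    _ ≤ (∑ i, (n : ℝ)⁻¹ * z i) ^ n := by
        gcongr
        exact prod_nonneg fun i _ => Real.rpow_nonneg (hz i) _
    _ = ((∑ i, z i) / n) ^ n := by rw [← mul_sum, inv_mul_eq_div]

theorem exists_one_lt_one_sub_pow_mul (n : ℕ) {g : ℝ} (hg : n < g) :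
    ∃ t : ℝ, 0 < t ∧ t < 1 ∧ 1 < (1 - t) ^ n * (1 + t / (1 - t) * g) := by
  have hn : (0 : ℝ) ≤ n := n.cast_nonneg
  have hg0 : 0 < g := hn.trans_lt hg
  set t := (g - n) / (2 * (n + 1) * g)
  have ht0 : 0 < t := div_pos (by linarith) (by positivity)
  have htg : t * (2 * (n + 1) * g) = g - n := div_mul_cancel₀ _ (by positivity)
  have ht1 : t < 1 := by
    rw [div_lt_one (by positivity)]
    nlinarith [mul_nonneg hn hg0.le]
  refine ⟨t, ht0, ht1, ?_⟩
  have hbern : 1 - n * t ≤ (1 - t) ^ n := by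
    simpa [sub_eq_add_neg] using one_add_mul_le_pow (a := -t) (by linarith) n
  -- `(1 - n t)(1 - t + t g) - (1 - t) = t ((g - n) - n t (g - 1))`, and `n t g < g - n`
  have hsmall : 0 < (g - n) - n * t * (g - 1) := by nlinarith [mul_nonneg hn ht0.le]
  have hgain : 1 - t < (1 - n * t) * (1 - t + t * g) := by nlinarith [mul_pos ht0 hsmall]
  have h1t : 1 - t ≠ 0 := by linarith
  rw [show 1 + t / (1 - t) * g = (1 - t + t * g) / (1 - t) by field_simp, mul_div_assoc',
    one_lt_div (by linarith)]
  calc 1 - t < (1 - n * t) * (1 - t + t * g) := hgain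
    _ ≤ (1 - t) ^ n * (1 - t + t * g) := by gcongr

theorem Finset.sum_orderEmbOfFin {α M : Type*} [LinearOrder α] [AddCommMonoid M] (s : Finset α)
    {k : ℕ} (h : s.card = k) (f : α → M) : ∑ j ∈ s, f j = ∑ i, f (s.orderEmbOfFin h i) := by
  conv_lhs => rw [← map_orderEmbOfFin_univ s h]
  rw [sum_map]
  rfl

theorem Function.Injective.range_update {α β : Type*} [DecidableEq α] {f : α → β}
    (hf : f.Injective) (a : α) (b : β) :
    Set.range (Function.update f a b) = insert b (Set.range f \ {f a}) := by
  ext x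
  simp only [Set.mem_range, Set.mem_insert_iff, Set.mem_sdiff, Set.mem_singleton_iff]
  constructor
  · rintro ⟨y, rfl⟩
    by_cases hy : y = a
    · simp [hy]
    · rw [Function.update_of_ne hy]
      exact Or.inr ⟨⟨y, rfl⟩, hf.ne hy⟩
  · rintro (rfl | ⟨⟨y, rfl⟩, hy⟩)
    · exact ⟨a, by simp⟩
    · exact ⟨y, Function.update_of_ne (fun h => hy (by rw [h])) _ _⟩

theorem Function.Injective.update_of_notMem_range {α β : Type*} [DecidableEq α] {f : α → β}
    (hf : f.Injective) (a : α) {b : β} (hb : b ∉ Set.range f) :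
    (Function.update f a b).Injective := by
  intro x y h
  by_cases hx : x = a <;> by_cases hy : y = a
  · rw [hx, hy]
  · simp only [hx, Function.update_self, Function.update_of_ne hy] at h
    exact absurd ⟨y, h.symm⟩ hb
  · simp only [hy, Function.update_self, Function.update_of_ne hx] at h
    exact absurd ⟨x, h⟩ hb
  · simpa [Function.update_of_ne hx, Function.update_of_ne hy, hf.eq_iff] using h

namespace Matrix

variable {n : Type*} [Fintype n] [DecidableEq n]

theorem PosSemidef.det_le_trace_div_card_pow {C : Matrix n n ℝ} (hC : C.PosSemidef) :
    C.det ≤ (C.trace / Fintype.card n) ^ Fintype.card n := by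
  rw [hC.isHermitian.det_eq_prod_eigenvalues, hC.isHermitian.trace_eq_sum_eigenvalues]
  simpa using prod_le_sum_div_card_pow hC.eigenvalues_nonneg

theorem PosDef.det_le_det_mul_trace_inv_mul_div_card_pow {A B : Matrix n n ℝ}
    (hA : A.PosDef) (hB : B.PosSemidef) :
    B.det ≤ A.det * ((A⁻¹ * B).trace / Fintype.card n) ^ Fintype.card n := by
  open scoped MatrixOrder in
  obtain ⟨S, hS, hSS⟩ : ∃ S : Matrix n n ℝ, S.PosSemidef ∧ S * S = A :=
    ⟨CFC.sqrt A, (CFC.sqrt_nonneg A).posSemidef, CFC.sqrt_mul_sqrt_self A hA.posSemidef.nonneg⟩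
  -- AM-GM for `S⁻¹ B S⁻¹`, whose determinant is `det B / det A` and trace `tr (A⁻¹ B)`
  have hC : (S⁻¹ * B * S⁻¹).PosSemidef := by
    have hSinv : S⁻¹ᵀ = S⁻¹ := by
      rw [transpose_nonsing_inv, ← conjTranspose_eq_transpose_of_trivial, hS.isHermitian.eq]
    simpa [hSinv] using hB.mul_mul_conjTranspose_same S⁻¹
  have hdetS : S.det * S.det = A.det := by rw [← det_mul, hSS]
  have hSdet : S.det ≠ 0 := fun h => hA.det_pos.ne' (by rw [← hdetS, h, zero_mul])
  have hdet : A.det * (S⁻¹ * B * S⁻¹).det = B.det := by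
    rw [det_mul, det_mul, det_nonsing_inv, Ring.inverse_eq_inv', ← hdetS]
    field_simp
  have htr : (S⁻¹ * B * S⁻¹).trace = (A⁻¹ * B).trace := by
    rw [trace_mul_comm, ← Matrix.mul_assoc, ← Matrix.mul_inv_rev, hSS]
  rw [← hdet, ← htr]
  exact mul_le_mul_of_nonneg_left hC.det_le_trace_div_card_pow hA.det_pos.le

theorem det_add_vecMulVec {A : Matrix n n ℝ} (hA : IsUnit A.det) (u v : n → ℝ) :
    (A + vecMulVec u v).det = A.det * (1 + v ⬝ᵥ A⁻¹ *ᵥ u) := by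
  rw [vecMulVec_eq Unit, det_add_replicateCol_mul_replicateRow hA, det_unique (n := Unit),
    Matrix.mul_assoc, ← replicateCol_mulVec, add_apply, one_apply_eq,
    replicateRow_mul_replicateCol_apply]

theorem vecMul_inv_apply {Y : Matrix n n ℝ} (hY : Y.det ≠ 0) (x : n → ℝ) (k : n) :
    (x ᵥ* Y⁻¹) k = (Y.updateRow k x).det / Y.det := by
  rw [eq_div_iff hY, mul_comm, ← smul_eq_mul, ← Pi.smul_apply,
    det_smul_inv_vecMul_eq_cramer_transpose Y x (isUnit_iff_ne_zero.2 hY), cramer_transpose_apply]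

theorem dotProduct_inv_transpose_mul_diagonal_mul_mulVec (Y : Matrix n n ℝ)
    {e : n → ℝ} (he : ∀ k, e k ≠ 0) (x : n → ℝ) :
    x ⬝ᵥ (Yᵀ * diagonal e * Y)⁻¹ *ᵥ x = ∑ k, (x ᵥ* Y⁻¹) k ^ 2 / e k := by
  have hinv : (diagonal e)⁻¹ = diagonal fun k => (e k)⁻¹ := inv_eq_left_inv <| by
    rw [diagonal_mul_diagonal, ← diagonal_one]
    exact congrArg diagonal (funext fun k => inv_mul_cancel₀ (he k))
  rw [Matrix.mul_inv_rev, Matrix.mul_inv_rev, hinv, ← mulVec_mulVec, ← mulVec_mulVec,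
    ← transpose_nonsing_inv, mulVec_transpose, dotProduct_mulVec]
  simp only [dotProduct, mulVec_diagonal, div_eq_mul_inv, sq]
  exact sum_congr rfl fun k _ => by ring

theorem det_submatrix_sq_eq_of_range_eq {m R : Type*} [CommRing R] (X : Matrix m n R)
    {σ τ : n → m} (hσ : σ.Injective) (hτ : τ.Injective) (h : Set.range τ = Set.range σ) :
    (X.submatrix τ id).det ^ 2 = (X.submatrix σ id).det ^ 2 := by
  let e : n ≃ n :=
    (Equiv.ofInjective τ hτ).trans ((Equiv.setCongr h).trans (Equiv.ofInjective σ hσ).symm)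
  have he : (X.submatrix σ id).submatrix e id = X.submatrix τ id := by
    ext k j
    simp [e, Equiv.apply_ofInjective_symm]
  rw [← he, det_permute, mul_pow, ← Int.cast_pow, ← Units.val_pow_eq_pow_val, Int.units_sq,
    Units.val_one, Int.cast_one, one_mul]

end Matrix

section Design

variable {ι κ : Type*} [Fintype ι] [DecidableEq ι] {X : Matrix ι κ ℝ} {w p : ι → ℝ}

variable (X w p) in
def infoMatrix : Matrix κ κ ℝ :=
  Xᵀ * diagonal (fun i => p i * w i) * X

variable (X w p) in
theorem infoMatrix_eq_sum : infoMatrix X w p = ∑ k, (p k * w k) • vecMulVec (X k) (X k) := by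
  ext a b
  rw [infoMatrix, mul_apply, Matrix.sum_apply]
  simp only [mul_diagonal, transpose_apply, Matrix.smul_apply, vecMulVec_apply, smul_eq_mul]
  exact sum_congr rfl fun k _ => by ring

variable (X w p) in
theorem infoMatrix_segment (t : ℝ) (i : ι) :
    infoMatrix X w ((1 - t) • p + t • Pi.single i 1) =
      (1 - t) • infoMatrix X w p + t • vecMulVec (w i • X i) (X i) := by
  simp only [infoMatrix_eq_sum, smul_sum, Pi.add_apply, Pi.smul_apply, smul_eq_mul, add_mul,
    add_smul, sum_add_distrib, smul_smul, Pi.single_apply, mul_ite, mul_one, mul_zero, ite_mul,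
    zero_mul, ite_smul, zero_smul, sum_ite_eq', mem_univ, if_true]
  congr 1
  · exact sum_congr rfl fun k _ => by rw [mul_assoc]
  · ext a b
    simp only [Matrix.smul_apply, vecMulVec_apply, Pi.smul_apply, smul_eq_mul]
    ring

variable [Fintype κ]

theorem posSemidef_infoMatrix (hw : ∀ k, 0 ≤ w k) (hp : ∀ k, 0 ≤ p k) :
    (infoMatrix X w p).PosSemidef := by
  simpa [infoMatrix] using
    (PosSemidef.diagonal fun k => mul_nonneg (hp k) (hw k)).conjTranspose_mul_mul_same X

variable (X w p) in
theorem trace_mul_infoMatrix (N : Matrix κ κ ℝ) :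
    (N * infoMatrix X w p).trace = ∑ k, p k * (w k * (X k ⬝ᵥ N *ᵥ X k)) := by
  simp only [infoMatrix_eq_sum, mul_sum, trace_sum, Matrix.mul_smul, trace_smul, mul_vecMulVec,
    trace_vecMulVec, smul_eq_mul, dotProduct_comm (N *ᵥ _), mul_assoc]

variable [DecidableEq κ]

variable (X w p) in
noncomputable def predVariance (k : ι) : ℝ :=
  w k * (X k ⬝ᵥ (infoMatrix X w p)⁻¹ *ᵥ X k)

theorem isMaxOn_of_predVariance_le (hw : ∀ k, 0 ≤ w k) (hM : (infoMatrix X w p).PosDef)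
    (hvar : ∀ k, predVariance X w p k ≤ Fintype.card κ) :
    IsMaxOn (fun q => (infoMatrix X w q).det) (stdSimplex ℝ ι) p := by
  refine isMaxOn_iff.2 fun q hq => ?_
  set n := Fintype.card κ
  set T := ((infoMatrix X w p)⁻¹ * infoMatrix X w q).trace
  have htr : T = ∑ k, q k * predVariance X w p k := trace_mul_infoMatrix X w q _
  have hT_le : T ≤ n :=
    calc T = ∑ k, q k * predVariance X w p k := htr
      _ ≤ ∑ k, q k * n := sum_le_sum fun k _ => mul_le_mul_of_nonneg_left (hvar k) (hq.1 k)
      _ = n := by rw [← sum_mul, hq.2, one_mul]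
  have hT_nonneg : 0 ≤ T := htr ▸ sum_nonneg fun k _ => mul_nonneg (hq.1 k) <|
    mul_nonneg (hw k) (by simpa using hM.inv.posSemidef.dotProduct_mulVec_nonneg (X k))
  calc (infoMatrix X w q).det
      ≤ (infoMatrix X w p).det * (T / n) ^ n :=
        hM.det_le_det_mul_trace_inv_mul_div_card_pow (posSemidef_infoMatrix hw hq.1)
    _ ≤ (infoMatrix X w p).det * 1 := by
        gcongr
        · exact hM.det_pos.le
        · exact pow_le_one₀ (by positivity) (div_le_one_of_le₀ hT_le n.cast_nonneg)
    _ = (infoMatrix X w p).det := mul_one _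

theorem exists_det_infoMatrix_gt (hp : p ∈ stdSimplex ℝ ι) (hM : (infoMatrix X w p).PosDef)
    {k : ι} (hk : Fintype.card κ < predVariance X w p k) :
    ∃ q ∈ stdSimplex ℝ ι, (infoMatrix X w p).det < (infoMatrix X w q).det := by
  obtain ⟨t, ht0, ht1, hgain⟩ := exists_one_lt_one_sub_pow_mul _ hk
  have h1t : 1 - t ≠ 0 := by linarith
  refine ⟨(1 - t) • p + t • Pi.single k 1,
    convex_stdSimplex ℝ ι hp (single_mem_stdSimplex ℝ k) (by linarith) ht0.le (by ring), ?_⟩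
  have hseg : infoMatrix X w ((1 - t) • p + t • Pi.single k 1) =
      (1 - t) • (infoMatrix X w p + vecMulVec ((t / (1 - t) * w k) • X k) (X k)) := by
    rw [infoMatrix_segment, smul_add, smul_vecMulVec, smul_vecMulVec, smul_smul, smul_smul]
    congr 2
    field_simp
  have hquad : X k ⬝ᵥ (infoMatrix X w p)⁻¹ *ᵥ ((t / (1 - t) * w k) • X k) =
      t / (1 - t) * predVariance X w p k := by
    rw [mulVec_smul, dotProduct_smul, smul_eq_mul, mul_assoc, predVariance]
  rw [hseg, det_smul, det_add_vecMulVec (isUnit_iff_ne_zero.2 hM.det_pos.ne'), hquad,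
    mul_left_comm]
  exact lt_mul_of_one_lt_right hM.det_pos hgain

theorem predVariance_le_of_isMaxOn (hp : p ∈ stdSimplex ℝ ι) (hM : (infoMatrix X w p).PosDef)
    (hmax : IsMaxOn (fun q => (infoMatrix X w q).det) (stdSimplex ℝ ι) p) (k : ι) :
    predVariance X w p k ≤ Fintype.card κ := by
  by_contra! hk
  obtain ⟨q, hq, hlt⟩ := exists_det_infoMatrix_gt hp hM hk
  exact (isMaxOn_iff.1 hmax q hq).not_gt hlt

end Design

noncomputable def saturatedDesign {ι : Type*} [DecidableEq ι] (d : ℕ) (I : Finset ι) : ι → ℝ :=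
  fun j => if j ∈ I then (d : ℝ)⁻¹ else 0

theorem saturatedDesign_mem_stdSimplex {ι : Type*} [Fintype ι] [DecidableEq ι] {d : ℕ}
    {I : Finset ι} (hI : I.card = d) (hd : 0 < d) : saturatedDesign d I ∈ stdSimplex ℝ ι := by
  refine ⟨fun k => ?_, ?_⟩
  · unfold saturatedDesign
    split_ifs <;> positivity
  · simp [saturatedDesign, hI, hd.ne']

section Saturated

variable {m d : ℕ} {X : Matrix (Fin m) (Fin d) ℝ} {w : Fin m → ℝ} {I : Finset (Fin m)}
  {i : Fin m}

theorem subdet_eq_det_submatrix (hI : I.card = d) :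
    subdet m d X I = (X.submatrix (I.orderEmbOfFin hI) id).det := by
  simp only [subdet, dif_pos hI, coe_orderIsoOfFin_apply]

theorem subdet_sq_eq_of_range_eq {S : Finset (Fin m)} {τ : Fin d → Fin m} (hτ : τ.Injective)
    (h : Set.range τ = S) : subdet m d X S ^ 2 = (X.submatrix τ id).det ^ 2 := by
  have hS : S.card = d := by
    rw [← coe_inj.1 (show ((univ.image τ : Finset (Fin m)) : Set (Fin m)) = S by simp [h]),
      card_image_of_injective _ hτ, card_univ, Fintype.card_fin]
  rw [subdet_eq_det_submatrix hS]
  exact det_submatrix_sq_eq_of_range_eq X hτ (S.orderEmbOfFin hS).injective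
    (by rw [h, range_orderEmbOfFin])

theorem subdet_insert_erase_sq (hI : I.card = d) (hi : i ∉ I) (k : Fin d) :
    subdet m d X (insert i (I.erase (I.orderEmbOfFin hI k))) ^ 2 =
      ((X.submatrix (I.orderEmbOfFin hI) id).updateRow k (X i)).det ^ 2 := by
  set σ := I.orderEmbOfFin hI
  have hσ : Set.range σ = I := range_orderEmbOfFin I hI
  have hupd : (X.submatrix σ id).updateRow k (X i) = X.submatrix (Function.update σ k i) id := by
    ext l j
    by_cases hl : l = k <;> simp [hl]
  rw [hupd]
  refine subdet_sq_eq_of_range_eq (σ.injective.update_of_notMem_range k (by rwa [hσ])) ?_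
  rw [σ.injective.range_update, hσ]
  simp

theorem infoMatrix_saturatedDesign (hI : I.card = d) :
    infoMatrix X w (saturatedDesign d I) =
      infoMatrix (X.submatrix (I.orderEmbOfFin hI) id) (fun k => w (I.orderEmbOfFin hI k))
        (fun _ => (d : ℝ)⁻¹) := by
  rw [infoMatrix_eq_sum, infoMatrix_eq_sum]
  simp only [saturatedDesign, ite_mul, zero_mul, ite_smul, zero_smul, sum_ite_mem, univ_inter]
  rw [sum_orderEmbOfFin I hI]
  rfl

theorem posDef_infoMatrix_saturatedDesign (hw : ∀ k, 0 < w k) (hI : I.card = d)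
    (hdet : subdet m d X I ≠ 0) : (infoMatrix X w (saturatedDesign d I)).PosDef := by
  rw [infoMatrix_saturatedDesign hI]
  refine (posSemidef_infoMatrix (fun k => (hw _).le) fun _ => by positivity)
    |>.posDef_iff_det_ne_zero.2 ?_
  rw [infoMatrix, det_mul, det_mul, det_transpose, det_diagonal, ← subdet_eq_det_submatrix hI]
  refine mul_ne_zero (mul_ne_zero hdet (prod_ne_zero_iff.2 fun k _ => ?_)) hdet
  exact mul_ne_zero (inv_ne_zero (Nat.cast_ne_zero.2 k.pos.ne')) (hw _).ne'

theorem predVariance_saturatedDesign (hw : ∀ k, 0 < w k) (hI : I.card = d)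
    (hdet : subdet m d X I ≠ 0) (i : Fin m) :
    predVariance X w (saturatedDesign d I) i = d * w i / subdet m d X I ^ 2 *
      ∑ k, ((X.submatrix (I.orderEmbOfFin hI) id).updateRow k (X i)).det ^ 2 /
        w (I.orderEmbOfFin hI k) := by
  have he : ∀ k : Fin d, (d : ℝ)⁻¹ * w (I.orderEmbOfFin hI k) ≠ 0 := fun k =>
    mul_ne_zero (inv_ne_zero (Nat.cast_ne_zero.2 k.pos.ne')) (hw _).ne'
  rw [predVariance, infoMatrix_saturatedDesign hI, infoMatrix,
    dotProduct_inv_transpose_mul_diagonal_mul_mulVec _ he, mul_sum, mul_sum]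
  rw [subdet_eq_det_submatrix hI] at hdet ⊢
  refine sum_congr rfl fun k _ => ?_
  rw [vecMul_inv_apply hdet]
  have := he k
  field_simp

theorem predVariance_saturatedDesign_of_mem (hw : ∀ k, 0 < w k) (hI : I.card = d)
    (hdet : subdet m d X I ≠ 0) (hi : i ∈ I) : predVariance X w (saturatedDesign d I) i = d := by
  obtain ⟨k₀, rfl⟩ : i ∈ Set.range (I.orderEmbOfFin hI) := by rwa [range_orderEmbOfFin]
  have hrow : X (I.orderEmbOfFin hI k₀) = X.submatrix (I.orderEmbOfFin hI) id k₀ := rfl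
  rw [predVariance_saturatedDesign hw hI hdet, hrow, sum_eq_single k₀, updateRow_eq_self,
    subdet_eq_det_submatrix hI]
  · rw [subdet_eq_det_submatrix hI] at hdet
    have := (hw (I.orderEmbOfFin hI k₀)).ne'
    field_simp
  · intro k _ hk
    rw [det_zero_of_row_eq hk (by rw [updateRow_self, updateRow_ne (Ne.symm hk)]),
      zero_pow two_ne_zero, zero_div]
  · simp

theorem predVariance_saturatedDesign_le_iff (hw : ∀ k, 0 < w k) (hI : I.card = d) (hd : 0 < d)
    (hdet : subdet m d X I ≠ 0) (hi : i ∉ I) :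
    predVariance X w (saturatedDesign d I) i ≤ d ↔
      ∑ j ∈ I, subdet m d X (insert i (I.erase j)) ^ 2 / w j ≤ subdet m d X I ^ 2 / w i := by
  rw [sum_orderEmbOfFin I hI, predVariance_saturatedDesign hw hI hdet]
  simp_rw [subdet_insert_erase_sq hI hi]
  set S := ∑ k, ((X.submatrix (I.orderEmbOfFin hI) id).updateRow k (X i)).det ^ 2 /
    w (I.orderEmbOfFin hI k)
  have hD : 0 < subdet m d X I ^ 2 := by positivity
  rw [show (d : ℝ) * w i / subdet m d X I ^ 2 * S = d * (S * w i / subdet m d X I ^ 2) by ring,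
    mul_le_iff_le_one_right (by positivity), div_le_one hD, le_div_iff₀ (hw i)]

end Saturated

/-- The saturated design p_I (uniform weight 1/d on I, |I| = d, det X[I] ≠ 0) is
D-optimal iff for each i ∉ I, ∑_{j∈I} det(X[{i}∪I∖{j}])²/wⱼ ≤ det(X[I])²/wᵢ. -/
theorem saturated_D_optimal_iff (m d : ℕ) (X : Matrix (Fin m) (Fin d) ℝ)
    (w : Fin m → ℝ) (hw : ∀ k, 0 < w k) (I : Finset (Fin m)) (hI : I.card = d)
    (hdet : subdet m d X I ≠ 0) :
    IsMaxOn (fdet m d X w) {q : Fin m → ℝ | (∀ k, 0 ≤ q k) ∧ ∑ k, q k = 1}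
        (fun j => if j ∈ I then ((d : ℝ))⁻¹ else 0) ↔
      ∀ i ∉ I,
        ∑ j ∈ I, (subdet m d X (insert i (I.erase j))) ^ 2 / w j ≤
          (subdet m d X I) ^ 2 / w i := by
  -- for `d = 0` the design is not a probability vector, but `I = ∅` and all determinants are `1`
  rcases d.eq_zero_or_pos with rfl | hd
  · refine iff_of_true (isMaxOn_iff.2 fun q _ => by simp [fdet]) fun i _ => ?_
    rw [card_eq_zero.1 hI, sum_empty]
    exact div_nonneg (sq_nonneg _) (hw i).le
  change IsMaxOn (fun q => (infoMatrix X w q).det) (stdSimplex ℝ (Fin m)) (saturatedDesign d I) ↔ _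
  have hM := posDef_infoMatrix_saturatedDesign hw hI hdet
  constructor
  · intro hmax i hi
    rw [← predVariance_saturatedDesign_le_iff hw hI hd hdet hi]
    simpa using predVariance_le_of_isMaxOn (saturatedDesign_mem_stdSimplex hI hd) hM hmax i
  · refine fun hcond => isMaxOn_of_predVariance_le (fun k => (hw k).le) hM fun k => ?_
    rw [Fintype.card_fin]
    by_cases hk : k ∈ I
    · exact (predVariance_saturatedDesign_of_mem hw hI hdet hk).le
    · exact (predVariance_saturatedDesign_le_iff hw hI hd hdet hk).2 (hcond k hk)
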